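/- There exists A₀ > 0 such that for all real a, b, c with a > 0, 0 < b < 1, 0 < c < a and ab ≥ A₀, the quantity h(c) = ∫_0^1 (1/√(x(x + c/b)))·((1 − bx)/√((1−x)(1 + bx/a)) − 1) dx satisfies |h(c)| ≤ 2 ln 2. -/

import Mathlib

open Real MeasureTheory intervalIntegral Set

/-!
Write the integrand as `P (R - 1)` with `P = 1/√(x(x + c/b))` and
`R = (1 - bx)/√((1-x)(1 + bx/a))`, and put `t = √(1-x)`. On `(0,1)` we have `0 < P ≤ 1/x` and
`R ≤ 1/t`, so the integrand is at most `(1/x)(1/t - 1) = 1/(t(1+t))`, the derivative of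
`-2 log(1 + t)`, whose integral over `[0,1]` is `2 log 2`. In the other direction
`1 - R ≤ x (1 + b/(2a))`, so the integrand is at least `-(1 + b/(2a)) ≥ -5/4 > -2 log 2` once
`ab ≥ 2`. These two bounds also show that the integral converges.
-/

lemma intervalIntegrable_of_forall_mem_Ioo_le_le {f g₁ g₂ : ℝ → ℝ} {u v : ℝ}
    (huv : u ≤ v) (hf : AEStronglyMeasurable f volume)
    (hg₁ : IntervalIntegrable g₁ volume u v) (hg₂ : IntervalIntegrable g₂ volume u v)
    (h₁ : ∀ x ∈ Ioo u v, g₁ x ≤ f x) (h₂ : ∀ x ∈ Ioo u v, f x ≤ g₂ x) :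
    IntervalIntegrable f volume u v := by
  rw [intervalIntegrable_iff_integrableOn_Ioo_of_le huv] at hg₁ hg₂ ⊢
  exact integrable_of_le_of_le hf.restrict (ae_restrict_of_forall_mem measurableSet_Ioo h₁)
    (ae_restrict_of_forall_mem measurableSet_Ioo h₂) hg₁ hg₂

lemma hasDerivAt_neg_two_mul_log_one_add_sqrt_one_sub {x : ℝ} (hx : x < 1) :
    HasDerivAt (fun y ↦ -2 * log (1 + √(1 - y))) (1 / (√(1 - x) * (1 + √(1 - x)))) x := by
  have ht : 0 < √(1 - x) := sqrt_pos.mpr (by linarith)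
  have hsqrt := ((hasDerivAt_id' x).const_sub 1).sqrt (by linarith)
  refine (((hsqrt.const_add 1).log (by positivity)).const_mul (-2)).congr_deriv ?_
  field_simp

lemma continuous_neg_two_mul_log_one_add_sqrt_one_sub :
    Continuous fun y : ℝ ↦ -2 * log (1 + √(1 - y)) :=
  continuous_const.mul <| Continuous.log (by fun_prop) fun _ ↦ by positivity

lemma intervalIntegrable_one_div_sqrt_one_sub_mul :
    IntervalIntegrable (fun x : ℝ ↦ 1 / (√(1 - x) * (1 + √(1 - x)))) volume 0 1 :=
  (intervalIntegrable_iff_integrableOn_Ioc_of_le zero_le_one).mpr <|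
    integrableOn_deriv_of_nonneg continuous_neg_two_mul_log_one_add_sqrt_one_sub.continuousOn
      (fun _ hx ↦ hasDerivAt_neg_two_mul_log_one_add_sqrt_one_sub hx.2) fun _ _ ↦ by positivity

lemma integral_one_div_sqrt_one_sub_mul :
    ∫ x in (0 : ℝ)..1, 1 / (√(1 - x) * (1 + √(1 - x))) = 2 * log 2 := by
  rw [integral_eq_sub_of_hasDerivAt_of_le zero_le_one
    continuous_neg_two_mul_log_one_add_sqrt_one_sub.continuousOn
    (fun _ hx ↦ hasDerivAt_neg_two_mul_log_one_add_sqrt_one_sub hx.2)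
    intervalIntegrable_one_div_sqrt_one_sub_mul]
  norm_num

lemma one_div_sqrt_mul_add_le {x k : ℝ} (hx : 0 < x) (hk : 0 ≤ k) :
    1 / √(x * (x + k)) ≤ 1 / x :=
  one_div_le_one_div_of_le hx <| (le_sqrt hx.le (by positivity)).mpr (by nlinarith)

lemma one_div_mul_sqrt_one_sub_sub_one {x : ℝ} (hx : x ∈ Ioo (0 : ℝ) 1) :
    1 / x * (1 / √(1 - x) - 1) = 1 / (√(1 - x) * (1 + √(1 - x))) := by
  obtain ⟨hx0, hx1⟩ := hx
  have ht : 0 < √(1 - x) := sqrt_pos.mpr (by linarith)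
  have ht2 : √(1 - x) ^ 2 = 1 - x := sq_sqrt (by linarith)
  field_simp
  linear_combination (-1 : ℝ) * ht2

noncomputable def dzhanibekovIntegrand (a b c x : ℝ) : ℝ :=
  1 / √(x * (x + c / b)) * ((1 - b * x) / √((1 - x) * (1 + b * x / a)) - 1)

section

variable {a b c x : ℝ}

lemma sqrt_one_sub_le_sqrt_mul (ha : 0 ≤ a) (hb : 0 ≤ b) (hx : x ∈ Ioo (0 : ℝ) 1) :
    √(1 - x) ≤ √((1 - x) * (1 + b * x / a)) :=
  sqrt_le_sqrt <| le_mul_of_one_le_right (by linarith [hx.2])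
    (le_add_of_nonneg_right (by have := hx.1.le; positivity))

lemma div_sqrt_mul_le (ha : 0 ≤ a) (hb : 0 ≤ b) (hx : x ∈ Ioo (0 : ℝ) 1) :
    (1 - b * x) / √((1 - x) * (1 + b * x / a)) ≤ 1 / √(1 - x) := by
  have ht : 0 < √(1 - x) := sqrt_pos.mpr (by linarith [hx.2])
  have := hx.1.le
  rcases le_total (1 - b * x) 0 with hneg | hpos
  · exact (div_nonpos_of_nonpos_of_nonneg hneg (sqrt_nonneg _)).trans (by positivity)
  · exact div_le_div₀ zero_le_one (by nlinarith) ht (sqrt_one_sub_le_sqrt_mul ha hb hx)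

lemma one_sub_div_sqrt_mul_le (ha : 0 ≤ a) (hb : 0 ≤ b) (hb1 : b ≤ 1)
    (hx : x ∈ Ioo (0 : ℝ) 1) :
    1 - (1 - b * x) / √((1 - x) * (1 + b * x / a)) ≤ x * (1 + b / (2 * a)) := by
  -- `√(1 + z) ≤ 1 + z / 2` bounds the denominator by `t (1 + bx/(2a))`, and `1 - bx ≥ t²`.
  obtain ⟨hx0, hx1⟩ := hx
  set t := √(1 - x)
  set D := √((1 - x) * (1 + b * x / a))
  have ht : 0 < t := sqrt_pos.mpr (by linarith)
  have ht2 : t ^ 2 = 1 - x := sq_sqrt (by linarith)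
  have htD : t ≤ D := sqrt_one_sub_le_sqrt_mul ha hb ⟨hx0, hx1⟩
  have hDt : D ≤ t * (1 + x * (b / (2 * a))) := by
    rw [sqrt_le_left (by positivity), mul_pow, ht2]
    have hz : b * x / a = 2 * (x * (b / (2 * a))) := by field_simp
    rw [hz]
    nlinarith [mul_nonneg (by linarith : 0 ≤ 1 - x) (sq_nonneg (x * (b / (2 * a))))]
  have ht_sub : t - t ^ 2 ≤ t * x := by nlinarith
  have hxD : x * (1 + b / (2 * a)) * t ≤ x * (1 + b / (2 * a)) * D :=
    mul_le_mul_of_nonneg_left htD (by positivity)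
  rw [sub_le_iff_le_add, ← sub_le_iff_le_add', le_div_iff₀ (ht.trans_le htD)]
  nlinarith

lemma dzhanibekovIntegrand_le (ha : 0 ≤ a) (hb : 0 ≤ b) (hc : 0 ≤ c)
    (hx : x ∈ Ioo (0 : ℝ) 1) :
    dzhanibekovIntegrand a b c x ≤ 1 / (√(1 - x) * (1 + √(1 - x))) := by
  have ht : 0 < √(1 - x) := sqrt_pos.mpr (by linarith [hx.2])
  have ht1 : 1 ≤ 1 / √(1 - x) := one_le_one_div ht (sqrt_le_one.mpr (by linarith [hx.1]))
  calc dzhanibekovIntegrand a b c x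
      ≤ 1 / √(x * (x + c / b)) * (1 / √(1 - x) - 1) := by
        unfold dzhanibekovIntegrand
        gcongr _ * (?_ - 1)
        exact div_sqrt_mul_le ha hb hx
    _ ≤ 1 / x * (1 / √(1 - x) - 1) :=
        mul_le_mul_of_nonneg_right (one_div_sqrt_mul_add_le hx.1 (by positivity))
          (sub_nonneg.mpr ht1)
    _ = 1 / (√(1 - x) * (1 + √(1 - x))) := one_div_mul_sqrt_one_sub_sub_one hx

lemma neg_le_dzhanibekovIntegrand (ha : 0 ≤ a) (hb : 0 ≤ b) (hb1 : b ≤ 1) (hc : 0 ≤ c)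
    (hx : x ∈ Ioo (0 : ℝ) 1) :
    -(1 + b / (2 * a)) ≤ dzhanibekovIntegrand a b c x := by
  rw [neg_le, dzhanibekovIntegrand, ← mul_neg, neg_sub]
  calc 1 / √(x * (x + c / b)) * (1 - (1 - b * x) / √((1 - x) * (1 + b * x / a)))
      ≤ 1 / √(x * (x + c / b)) * (x * (1 + b / (2 * a))) := by
        gcongr _ * ?_
        exact one_sub_div_sqrt_mul_le ha hb hb1 hx
    _ ≤ 1 / x * (x * (1 + b / (2 * a))) := by
        gcongr ?_ * _
        · have := hx.1.le
          positivity
        · exact one_div_sqrt_mul_add_le hx.1 (by positivity)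
    _ = 1 + b / (2 * a) := by field_simp [hx.1.ne']

end

lemma measurable_dzhanibekovIntegrand (a b c : ℝ) :
    Measurable (dzhanibekovIntegrand a b c) := by
  unfold dzhanibekovIntegrand
  fun_prop

/-- Bound on the function `h` in the Dzhanibekov analysis: for `ab` large
enough, `|∫_0^1 (1/√(x(x+c/b)))·((1−bx)/√((1−x)(1+bx/a)) − 1) dx| ≤ 2·ln 2`. -/
theorem dzhanibekov_h_bound :
    ∃ A₀ > (0 : ℝ), ∀ a b c : ℝ,
      0 < a → 0 < b → b < 1 → 0 < c → c < a → A₀ ≤ a * b →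
      |∫ x in (0 : ℝ)..1,
          (1 / Real.sqrt (x * (x + c / b))) *
            ((1 - b * x) / Real.sqrt ((1 - x) * (1 + b * x / a)) - 1)| ≤
        2 * Real.log 2 := by
  refine ⟨2, two_pos, fun a b c ha hb hb1 hc _ hab ↦ ?_⟩
  have hlow : ∀ x ∈ Ioo (0 : ℝ) 1, -(1 + b / (2 * a)) ≤ dzhanibekovIntegrand a b c x :=
    fun _ hx ↦ neg_le_dzhanibekovIntegrand ha.le hb.le hb1.le hc.le hx
  have hup : ∀ x ∈ Ioo (0 : ℝ) 1,
      dzhanibekovIntegrand a b c x ≤ 1 / (√(1 - x) * (1 + √(1 - x))) :=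
    fun _ hx ↦ dzhanibekovIntegrand_le ha.le hb.le hc.le hx
  have hint : IntervalIntegrable (dzhanibekovIntegrand a b c) volume 0 1 :=
    intervalIntegrable_of_forall_mem_Ioo_le_le zero_le_one
      (measurable_dzhanibekovIntegrand a b c).aestronglyMeasurable intervalIntegrable_const
      intervalIntegrable_one_div_sqrt_one_sub_mul hlow hup
  have hβ : b / (2 * a) ≤ 1 / 4 := by
    rw [div_le_div_iff₀ (by positivity) four_pos]
    nlinarith
  have hlog2 := log_two_gt_d9
  change |∫ x in (0 : ℝ)..1, dzhanibekovIntegrand a b c x| ≤ 2 * log 2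
  rw [abs_le]
  constructor
  · calc -(2 * log 2)
        ≤ ∫ _ in (0 : ℝ)..1, -(1 + b / (2 * a)) := by
          rw [intervalIntegral.integral_const, sub_zero, one_smul]
          linarith
      _ ≤ ∫ x in (0 : ℝ)..1, dzhanibekovIntegrand a b c x :=
          integral_mono_on_of_le_Ioo zero_le_one intervalIntegrable_const hint hlow
  · calc ∫ x in (0 : ℝ)..1, dzhanibekovIntegrand a b c x
        ≤ ∫ x in (0 : ℝ)..1, 1 / (√(1 - x) * (1 + √(1 - x))) :=
          integral_mono_on_of_le_Ioo zero_le_one hint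
            intervalIntegrable_one_div_sqrt_one_sub_mul hup
      _ = 2 * log 2 := integral_one_div_sqrt_one_sub_mul
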